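/- Assume π is a positive continuous probability density on ℝ, q : ℝ² → [0,∞) is bounded continuous with ∫_ℝ q(x,y)dy = 1 for every x and satisfies the finite range assumption (|u| > s implies q(x,x+u) = 0), and moreover for every x ∈ ℝ there exists y ∈ [x−s, x+s] with q(x,y)·q(y,x) ≠ 0. Then the rejection probability function r(·) is continuous on ℝ and, for every a > 0, r_a := sup_{|x|≤a} r(x) < 1. -/

import Mathlib

open MeasureTheory Filter Topology

noncomputable section

/-- The probability measure on `ℝ` with density `π` w.r.t. Lebesgue measure. -/
def piMeas (π : ℝ → ℝ) : Measure ℝ := volume.withDensity fun x => ENNReal.ofReal (π x)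

/-- `t(x,y) = min(q(x,y), π(y) q(y,x) / π(x))`. -/
def mhT (π : ℝ → ℝ) (q : ℝ → ℝ → ℝ) (x y : ℝ) : ℝ := min (q x y) (π y * q y x / π x)

/-- The rejection probability `r(x) = 1 - ∫ t(x,y) dy`. -/
def mhR (π : ℝ → ℝ) (q : ℝ → ℝ → ℝ) (x : ℝ) : ℝ := 1 - ∫ y, mhT π q x y

/-!
The kernel `t` is continuous and vanishes off the band `|y - x| ≤ s`, so near any `x₀` the
integrals `∫ t(x, ·)` are integrals of a jointly continuous function over one fixed compact set,
hence depend continuously on `x`. At `y` with `q(x,y) q(y,x) ≠ 0` we have `t(x,y) > 0`, so the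
nonnegative continuous function `t(x, ·)` has positive integral and `r(x) < 1`. A continuous
function on the compact set `[-a, a]` attains its supremum, which is therefore `< 1`.
-/

theorem continuous_integral_of_eq_zero_of_lt_dist {X E : Type*} [MetricSpace X] [ProperSpace X]
    [MeasurableSpace X] [OpensMeasurableSpace X] {μ : Measure X} [IsFiniteMeasureOnCompacts μ]
    [NormedAddCommGroup E] [NormedSpace ℝ E] {f : X → X → E} (hf : Continuous f.uncurry)
    {s : ℝ} (hfs : ∀ x y, s < dist y x → f x y = 0) :
    Continuous fun x => ∫ y, f x y ∂μ := by
  refine continuous_iff_continuousAt.2 fun x₀ => ?_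
  have hloc : ContinuousOn (fun x => ∫ y, f x y ∂μ) (Metric.closedBall x₀ 1) := by
    refine continuousOn_integral_of_compact_support (isCompact_closedBall x₀ (s + 1))
      hf.continuousOn fun x y hx hy => hfs x y ?_
    rw [Metric.mem_closedBall, not_le] at hy
    rw [Metric.mem_closedBall] at hx
    linarith [dist_triangle y x x₀]
  exact hloc.continuousAt (Metric.closedBall_mem_nhds x₀ one_pos)

section MetropolisHastings

variable {π : ℝ → ℝ} {q : ℝ → ℝ → ℝ}

theorem mhT_nonneg (hπ : ∀ x, 0 ≤ π x) (hq : ∀ x y, 0 ≤ q x y) (x y : ℝ) :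
    0 ≤ mhT π q x y :=
  le_min (hq x y) (div_nonneg (mul_nonneg (hπ y) (hq y x)) (hπ x))

theorem mhT_pos (hπ : ∀ x, 0 < π x) (hq : ∀ x y, 0 ≤ q x y) {x y : ℝ}
    (hxy : q x y * q y x ≠ 0) : 0 < mhT π q x y := by
  obtain ⟨hq₁, hq₂⟩ := mul_ne_zero_iff.1 hxy
  exact lt_min ((hq x y).lt_of_ne' hq₁)
    (div_pos (mul_pos (hπ y) ((hq y x).lt_of_ne' hq₂)) (hπ x))

theorem mhT_eq_zero_of_lt_abs {s : ℝ} (hrange : ∀ x u : ℝ, s < |u| → q x (x + u) = 0)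
    {x y : ℝ} (h : s < |y - x|) : mhT π q x y = 0 := by
  have hxy : q x y = 0 := by simpa using hrange x (y - x) h
  have hyx : q y x = 0 := by simpa using hrange y (x - y) (by rwa [abs_sub_comm])
  simp [mhT, hxy, hyx]

theorem continuous_mhT (hπ : ∀ x, 0 < π x) (hπcont : Continuous π)
    (hqcont : Continuous fun p : ℝ × ℝ => q p.1 p.2) :
    Continuous (Function.uncurry (mhT π q)) :=
  hqcont.min <| ((hπcont.comp continuous_snd).mul (hqcont.comp continuous_swap)).div
    (hπcont.comp continuous_fst) fun p => (hπ p.1).ne'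

theorem hasCompactSupport_mhT {s : ℝ} (hrange : ∀ x u : ℝ, s < |u| → q x (x + u) = 0)
    (x : ℝ) : HasCompactSupport (mhT π q x) :=
  HasCompactSupport.intro (isCompact_closedBall x s) fun y hy =>
    mhT_eq_zero_of_lt_abs hrange (by simpa [Real.dist_eq] using hy)

theorem continuous_mhR (hπ : ∀ x, 0 < π x) (hπcont : Continuous π)
    (hqcont : Continuous fun p : ℝ × ℝ => q p.1 p.2) {s : ℝ}
    (hrange : ∀ x u : ℝ, s < |u| → q x (x + u) = 0) :
    Continuous (mhR π q) :=
  continuous_const.sub <| continuous_integral_of_eq_zero_of_lt_dist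
    (continuous_mhT hπ hπcont hqcont) fun _ _ h => mhT_eq_zero_of_lt_abs hrange h

theorem mhR_lt_one (hπ : ∀ x, 0 < π x) (hπcont : Continuous π) (hq : ∀ x y, 0 ≤ q x y)
    (hqcont : Continuous fun p : ℝ × ℝ => q p.1 p.2) {s : ℝ}
    (hrange : ∀ x u : ℝ, s < |u| → q x (x + u) = 0) {x y : ℝ} (hxy : q x y * q y x ≠ 0) :
    mhR π q x < 1 := by
  have hint : 0 < ∫ y, mhT π q x y :=
    Continuous.integral_pos_of_hasCompactSupport_nonneg_nonzero
      ((continuous_mhT hπ hπcont hqcont).uncurry_left x) (hasCompactSupport_mhT hrange x)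
      (mhT_nonneg (fun x => (hπ x).le) hq x) (mhT_pos hπ hq hxy).ne'
  rw [mhR]
  linarith

end MetropolisHastings

theorem r_continuous_and_ra_lt_one_general
    (π : ℝ → ℝ) (hπpos : ∀ x, 0 < π x) (hπcont : Continuous π)
    (q : ℝ → ℝ → ℝ) (hqnn : ∀ x y, 0 ≤ q x y)
    (hqcont : Continuous fun p : ℝ × ℝ => q p.1 p.2)
    (s : ℝ) (hrange : ∀ x u : ℝ, s < |u| → q x (x + u) = 0)
    (hqq : ∀ x : ℝ, ∃ y ∈ Set.Icc (x - s) (x + s), q x y * q y x ≠ 0) :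
    Continuous (mhR π q) ∧
      ∀ a : ℝ, 0 < a → sSup (mhR π q '' {x | |x| ≤ a}) < 1 := by
  have hcont := continuous_mhR hπpos hπcont hqcont hrange
  refine ⟨hcont, fun a ha => ?_⟩
  have hball : {x : ℝ | |x| ≤ a} = Metric.closedBall 0 a := by
    ext x
    simp
  rw [hball, (isCompact_closedBall 0 a).sSup_lt_iff_of_continuous
    ⟨0, Metric.mem_closedBall_self ha.le⟩ hcont.continuousOn]
  intro x _
  obtain ⟨y, -, hxy⟩ := hqq x
  exact mhR_lt_one hπpos hπcont hqnn hqcont hrange hxy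

theorem r_continuous_and_ra_lt_one
    (π : ℝ → ℝ) (hπpos : ∀ x, 0 < π x) (hπcont : Continuous π)
    (hπprob : ∫ x, π x = 1)
    (q : ℝ → ℝ → ℝ) (hqnn : ∀ x y, 0 ≤ q x y) (hqbdd : ∃ M, ∀ x y, q x y ≤ M)
    (hqcont : Continuous fun p : ℝ × ℝ => q p.1 p.2) (hqprob : ∀ x, ∫ y, q x y = 1)
    (s : ℝ) (hs : 0 < s) (hrange : ∀ x u : ℝ, s < |u| → q x (x + u) = 0)
    (hqq : ∀ x : ℝ, ∃ y ∈ Set.Icc (x - s) (x + s), q x y * q y x ≠ 0) :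
    Continuous (mhR π q) ∧
      ∀ a : ℝ, 0 < a → sSup (mhR π q '' {x | |x| ≤ a}) < 1 :=
  r_continuous_and_ra_lt_one_general π hπpos hπcont q hqnn hqcont s hrange hqq
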